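/- Let A be a terminating ARRIVAL instance with |V| = n, layer decomposition L_i = {v ∈ V ∪ {d,d̄} : dist(v) = i} where dist(v) is the shortest-path distance from v to {d, d̄} in G(A), and let φ ∈ (0,1). Consider the greedy procedure: S ← ∅, U ← L_0; for i = 1,...,ℓ, if |L_i| < φ|U| then add L_i to S and reset U ← ∅; in any case add L_i to U. Then the resulting set S satisfies |S| ≤ φ(n+2), and for every v ∈ V the shortest path from v to S ∪ {d, d̄} in G(A) has length at most log₂(n+2)/φ. -/

import Mathlib

variable {V : Type} [Fintype V] [DecidableEq V]

/-- An ARRIVAL instance: origin `o` and two successor functions into `V ⊕ Bool`,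
where `Sum.inr false` is the destination `d` and `Sum.inr true` is `d̄`. -/
structure Arrival (V : Type) where
  o : V
  sEven : V → V ⊕ Bool
  sOdd : V → V ⊕ Bool

/-- Destination predicate. -/
def DestP {V : Type} : V ⊕ Bool → Prop := fun u => ∃ t, u = Sum.inr t

/-- Edge relation of the switch graph (proper edges only). -/
def Arrival.Edge (A : Arrival V) (u w : V ⊕ Bool) : Prop :=
  ∃ x : V, u = Sum.inl x ∧ (w = A.sEven x ∨ w = A.sOdd x)

/-- There is a directed walk of length `m` from `u` to a vertex satisfying `P`. -/
def Arrival.PathLen (A : Arrival V) (u : V ⊕ Bool) (P : V ⊕ Bool → Prop) (m : ℕ) : Prop :=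
  ∃ f : ℕ → V ⊕ Bool, f 0 = u ∧ P (f m) ∧ ∀ i < m, A.Edge (f i) (f (i + 1))

/-- `m` is the length of a shortest directed path from `u` to a vertex satisfying `P`. -/
def Arrival.ShortestLen (A : Arrival V) (u : V ⊕ Bool) (P : V ⊕ Bool → Prop) (m : ℕ) : Prop :=
  A.PathLen u P m ∧ ∀ m' < m, ¬ A.PathLen u P m'

/-- The instance is terminating: from every vertex a destination is reachable. -/
def Arrival.Terminating (A : Arrival V) : Prop :=
  ∀ v : V, ∃ m, A.PathLen (Sum.inl v) DestP m

/-- One step of the run procedure on states (position, switch configuration);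
`false` means the current successor is the even one. Destinations are absorbing. -/
def Arrival.runStep [DecidableEq V] (A : Arrival V) :
    (V ⊕ Bool) × (V → Bool) → (V ⊕ Bool) × (V → Bool) := fun s =>
  match s.1 with
  | Sum.inr _ => s
  | Sum.inl v => ((if s.2 v then A.sOdd v else A.sEven v),
      fun u => if u = v then !s.2 v else s.2 u)

/-- The state of the run procedure after `k` proper steps (the train starts at `o`). -/
def Arrival.run [DecidableEq V] (A : Arrival V) (k : ℕ) : (V ⊕ Bool) × (V → Bool) :=
  A.runStep^[k] (Sum.inl A.o, fun _ => false)

open Classical in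
/-- The greedy ball-growing procedure on the layer decomposition:
`greedy L φ i = (S, U)` after processing layers `1,...,i`. -/
noncomputable def greedy {V : Type} [DecidableEq V]
    (L : ℕ → Finset (V ⊕ Bool)) (φ : ℝ) : ℕ → Finset (V ⊕ Bool) × Finset (V ⊕ Bool)
  | 0 => (∅, L 0)
  | (i + 1) =>
      let p := greedy L φ i
      if ((L (i + 1)).card : ℝ) < φ * (p.2.card : ℝ) then (p.1 ∪ L (i + 1), L (i + 1))
      else (p.1, p.2 ∪ L (i + 1))

/-!
Every greedy reset at layer `j` puts `L_j` into `S` and restarts `U` at `L_j`, while every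
layer that is not taken makes `U` grow by a factor `1 + φ`. Charging `φ|L_i|` to each layer
`L_i` pays for the layers put into `S`, so `|S| ≤ φ(n + 2)`. A vertex at distance `i` descends
along a shortest path to the layer `L_j` of the last reset `j ≤ i` (which lies in `S`, or is
`{d, d̄}` when `j = 0`), and `(1 + φ)^(i - j) ≤ |U_i| ≤ n + 2` together with `2^φ ≤ 1 + φ`
bounds `i - j`.
-/

open Finset Function

section Greedy

variable {α : Type} [DecidableEq α] (L : ℕ → Finset (α ⊕ Bool)) (φ : ℝ)

lemma greedy_succ (i : ℕ) :
    greedy L φ (i + 1) =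
      if ((L (i + 1)).card : ℝ) < φ * (greedy L φ i).2.card
      then ((greedy L φ i).1 ∪ L (i + 1), L (i + 1))
      else ((greedy L φ i).1, (greedy L φ i).2 ∪ L (i + 1)) := by
  rw [greedy]

lemma greedy_fst_mono : Monotone fun i => (greedy L φ i).1 := by
  refine monotone_nat_of_le_succ fun i => ?_
  rw [greedy_succ]
  split_ifs
  · exact subset_union_left
  · exact subset_rfl

lemma greedy_snd_subset_biUnion (i : ℕ) : (greedy L φ i).2 ⊆ (range (i + 1)).biUnion L := by
  induction i with
  | zero => simp [greedy]
  | succ i ih =>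
    rw [greedy_succ, range_add_one, biUnion_insert]
    split_ifs
    · exact subset_union_left
    · exact union_subset (ih.trans subset_union_right) subset_union_left

lemma card_greedy_fst_add_le (hφ : 0 ≤ φ) (i : ℕ) :
    ((greedy L φ i).1.card : ℝ) + φ * (greedy L φ i).2.card
      ≤ φ * ∑ k ∈ range (i + 1), ((L k).card : ℝ) := by
  induction i with
  | zero => simp [greedy]
  | succ i ih =>
    rw [greedy_succ, sum_range_succ]
    split_ifs with hcut
    · have : (((greedy L φ i).1 ∪ L (i + 1)).card : ℝ)
          ≤ (greedy L φ i).1.card + (L (i + 1)).card := by exact_mod_cast card_union_le _ _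
      simp only
      linarith
    · have hU : (((greedy L φ i).2 ∪ L (i + 1)).card : ℝ)
          ≤ (greedy L φ i).2.card + (L (i + 1)).card := by exact_mod_cast card_union_le _ _
      have := mul_le_mul_of_nonneg_left hU hφ
      simp only
      linarith

lemma card_greedy_snd_succ_of_not_lt (hL : Pairwise (Disjoint on L)) {i : ℕ}
    (hnocut : ¬ ((L (i + 1)).card : ℝ) < φ * (greedy L φ i).2.card) :
    (1 + φ) * (greedy L φ i).2.card ≤ (greedy L φ (i + 1)).2.card := by
  have hdisj : Disjoint (greedy L φ i).2 (L (i + 1)) := by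
    refine disjoint_of_subset_left (greedy_snd_subset_biUnion L φ i) ?_
    rw [disjoint_biUnion_left]
    exact fun k hk => hL (by simp at hk; omega)
  rw [greedy_succ, if_neg hnocut]
  simp only
  rw [card_union_of_disjoint hdisj]
  push_cast
  linarith

lemma exists_greedy_last_reset (hφ : 0 ≤ φ) (hL : Pairwise (Disjoint on L)) (i : ℕ) :
    ∃ j ≤ i, (j = 0 ∨ L j ⊆ (greedy L φ i).1) ∧
      (1 + φ) ^ (i - j) * ((L j).card : ℝ) ≤ (greedy L φ i).2.card := by
  induction i with
  | zero => exact ⟨0, le_rfl, Or.inl rfl, by simp [greedy]⟩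
  | succ i ih =>
    by_cases hcut : ((L (i + 1)).card : ℝ) < φ * (greedy L φ i).2.card
    · refine ⟨i + 1, le_rfl, Or.inr ?_, ?_⟩ <;> rw [greedy_succ, if_pos hcut]
      · exact subset_union_right
      · simp
    · obtain ⟨j, hji, hjS, hgrow⟩ := ih
      refine ⟨j, hji.trans i.le_succ, ?_, ?_⟩
      · rw [greedy_succ, if_neg hcut]
        exact hjS
      · calc (1 + φ) ^ (i + 1 - j) * ((L j).card : ℝ)
            = (1 + φ) * ((1 + φ) ^ (i - j) * (L j).card) := by
              rw [Nat.sub_add_comm hji, pow_succ]; ring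
          _ ≤ (1 + φ) * (greedy L φ i).2.card := by gcongr
          _ ≤ (greedy L φ (i + 1)).2.card := card_greedy_snd_succ_of_not_lt L φ hL hcut

end Greedy

section Paths

variable {α : Type} {A : Arrival α} {u : α ⊕ Bool} {P : α ⊕ Bool → Prop} {m : ℕ}

lemma Arrival.pathLen_zero_iff : A.PathLen u P 0 ↔ P u :=
  ⟨fun ⟨f, hf0, hP, _⟩ => hf0 ▸ hP, fun hP => ⟨fun _ => u, rfl, hP, by simp⟩⟩

lemma Arrival.PathLen.cons {w : α ⊕ Bool} (he : A.Edge u w) (hp : A.PathLen w P m) :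
    A.PathLen u P (m + 1) := by
  obtain ⟨f, hf0, hfm, hfe⟩ := hp
  refine ⟨fun i => if i = 0 then u else f (i - 1), by simp, by simp [hfm], ?_⟩
  rintro (_ | i) hi
  · simpa [hf0] using he
  · simpa using hfe i (by omega)

lemma Arrival.PathLen.exists_edge (hp : A.PathLen u P (m + 1)) :
    ∃ w, A.Edge u w ∧ A.PathLen w P m := by
  obtain ⟨f, hf0, hfm, hfe⟩ := hp
  exact ⟨f 1, hf0 ▸ hfe 0 (by omega), fun i => f (i + 1), rfl, hfm,
    fun i hi => hfe (i + 1) (by omega)⟩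

lemma Arrival.ShortestLen.le_of_pathLen {d : ℕ} (h : A.ShortestLen u P d)
    (hp : A.PathLen u P m) : d ≤ m :=
  not_lt.1 fun hlt => h.2 m hlt hp

variable {dist : α ⊕ Bool → ℕ}

lemma Arrival.destP_of_dist_eq_zero (hdist : ∀ u, A.ShortestLen u DestP (dist u))
    (hu : dist u = 0) : DestP u :=
  A.pathLen_zero_iff.1 (hu ▸ (hdist u).1)

lemma Arrival.exists_edge_dist_add_one (hdist : ∀ u, A.ShortestLen u DestP (dist u))
    (hu : dist u = m + 1) :
    ∃ w, A.Edge u w ∧ dist w + 1 = dist u := by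
  obtain ⟨w, he, hp⟩ := (hu ▸ (hdist u).1 : A.PathLen u DestP (m + 1)).exists_edge
  have hw := (hdist w).le_of_pathLen hp
  have hu' := (hdist u).le_of_pathLen ((hdist w).1.cons he)
  exact ⟨w, he, by omega⟩

lemma Arrival.pathLen_dist_eq_sub (hdist : ∀ u, A.ShortestLen u DestP (dist u)) (k : ℕ) :
    ∀ u, k ≤ dist u → A.PathLen u (fun w => dist w = dist u - k) k := by
  induction k with
  | zero => exact fun u _ => A.pathLen_zero_iff.2 rfl
  | succ k ih =>
    intro u hk
    obtain ⟨w, he, hw⟩ := A.exists_edge_dist_add_one hdist (u := u) (m := dist u - 1) (by omega)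
    have hp := ih w (by omega)
    rw [show dist w - k = dist u - (k + 1) by omega] at hp
    exact hp.cons he

end Paths

lemma natCast_le_logb_div_of_one_add_pow_le {φ x : ℝ} {k : ℕ} (hφ0 : 0 < φ) (hφ1 : φ ≤ 1)
    (hx : (1 + φ) ^ k ≤ x) : (k : ℝ) ≤ Real.logb 2 x / φ := by
  have hbern : (2 : ℝ) ^ φ ≤ 1 + φ := by
    simpa [one_add_one_eq_two] using
      rpow_one_add_le_one_add_mul_self (s := 1) (by norm_num) hφ0.le hφ1
  have hpow : (2 : ℝ) ^ (φ * k) ≤ x := by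
    rw [Real.rpow_mul zero_le_two, Real.rpow_natCast]
    exact (pow_le_pow_left₀ (by positivity) hbern k).trans hx
  rw [le_div_iff₀ hφ0, mul_comm,
    Real.le_logb_iff_rpow_le one_lt_two ((by positivity : (0 : ℝ) < (1 + φ) ^ k).trans_le hx)]
  exact hpow

theorem greedy_phi_set_general (A : Arrival V) (n ℓ : ℕ)
    (hn : Fintype.card V = n) (φ : ℝ) (hφ0 : 0 < φ) (hφ1 : φ < 1)
    (dist : V ⊕ Bool → ℕ) (hdist : ∀ u : V ⊕ Bool, A.ShortestLen u DestP (dist u))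
    (hℓ : ∀ u : V ⊕ Bool, dist u ≤ ℓ) :
    ∀ S : Finset (V ⊕ Bool),
      S = (greedy (fun i => Finset.univ.filter (fun u => dist u = i)) φ ℓ).1 →
      ((S.card : ℝ) ≤ φ * (n + 2)) ∧
        ∀ v : V, ∃ m : ℕ, A.PathLen (Sum.inl v) (fun u => u ∈ S ∨ DestP u) m ∧
          (m : ℝ) ≤ Real.logb 2 (n + 2) / φ := by
  rintro S rfl
  set L : ℕ → Finset (V ⊕ Bool) := fun i => univ.filter (fun u => dist u = i)
  have hcard : Fintype.card (V ⊕ Bool) = n + 2 := by simp [hn]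
  have hL : Pairwise (Disjoint on L) :=
    Set.pairwise_univ.1 (Set.pairwiseDisjoint_filter dist Set.univ univ)
  refine ⟨?_, fun v => ?_⟩
  · have hsum : ∑ k ∈ range (ℓ + 1), (L k).card = n + 2 := by
      rw [← hcard, ← card_univ, card_eq_sum_card_fiberwise (t := range (ℓ + 1))
        (fun u _ => mem_range.2 (Nat.lt_succ_of_le (hℓ u)))]
    have := card_greedy_fst_add_le L φ hφ0.le ℓ
    rw [← Nat.cast_sum, hsum] at this
    push_cast at this
    have : 0 ≤ φ * (greedy L φ ℓ).2.card := by positivity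
    linarith
  · obtain ⟨j, hji, hjS, hgrow⟩ := exists_greedy_last_reset L φ hφ0.le hL (dist (.inl v))
    obtain ⟨f, hf0, hfj, hfe⟩ := A.pathLen_dist_eq_sub hdist _ _ (Nat.sub_le _ j)
    rw [Nat.sub_sub_self hji] at hfj
    have hfL : f (dist (.inl v) - j) ∈ L j := by simp [L, hfj]
    refine ⟨_, ⟨f, hf0, ?_, hfe⟩, natCast_le_logb_div_of_one_add_pow_le hφ0 hφ1.le ?_⟩
    · rcases hjS with hj0 | hjS
      · exact .inr (A.destP_of_dist_eq_zero hdist (hfj.trans hj0))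
      · exact .inl (greedy_fst_mono L φ (hℓ _) (hjS hfL))
    · have hLj : (1 : ℝ) ≤ (L j).card := by exact_mod_cast card_pos.2 ⟨_, hfL⟩
      calc (1 + φ) ^ (dist (.inl v) - j)
          ≤ (1 + φ) ^ (dist (.inl v) - j) * (L j).card :=
            le_mul_of_one_le_right (by positivity) hLj
        _ ≤ (greedy L φ _).2.card := hgrow
        _ ≤ n + 2 := by exact_mod_cast hcard ▸ card_le_univ _

/-- The greedy procedure produces a `φ`-set: `|S| ≤ φ(n+2)` and every vertex has a
path of length at most `log₂(n+2)/φ` to `S ∪ {d, d̄}`. -/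
theorem greedy_phi_set (A : Arrival V) (hA : A.Terminating) (n ℓ : ℕ)
    (hn : Fintype.card V = n) (φ : ℝ) (hφ0 : 0 < φ) (hφ1 : φ < 1)
    (dist : V ⊕ Bool → ℕ) (hdist : ∀ u : V ⊕ Bool, A.ShortestLen u DestP (dist u))
    (hℓ : ∀ u : V ⊕ Bool, dist u ≤ ℓ) :
    ∀ S : Finset (V ⊕ Bool),
      S = (greedy (fun i => Finset.univ.filter (fun u => dist u = i)) φ ℓ).1 →
      ((S.card : ℝ) ≤ φ * (n + 2)) ∧
        ∀ v : V, ∃ m : ℕ, A.PathLen (Sum.inl v) (fun u => u ∈ S ∨ DestP u) m ∧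
          (m : ℝ) ≤ Real.logb 2 (n + 2) / φ :=
  greedy_phi_set_general A n ℓ hn φ hφ0 hφ1 dist hdist hℓ
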